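/- Consistency of the wide-stencil scheme for the smallest Hessian eigenvalue: Let u : ℝⁿ → ℝ be four times continuously differentiable on a neighborhood of a point x. Then, as h → 0⁺, min_{|v|=1} ( u(x + hv) − 2u(x) + u(x − hv) ) / h² = λ₁(D²u(x)) + O(h²), where λ₁(D²u(x)) denotes the smallest eigenvalue of the Hessian matrix D²u(x). -/

import Mathlib

/-!
Near `x` the third derivative `D²(∇u)` of `u` is `K`-Lipschitz for some `K`. Writing
`H = D(∇u)(x)`, the error `u(x + y) + u(x - y) - 2u(x) - ⟪H y, y⟫` is then at most `2K‖y‖⁴`: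
apply the mean value inequality successively to the even or odd parts `s ↦ Φ(x + sy) ± Φ(x - sy)`
of `Φ = D(∇u)`, `∇u` and `u`, each step gaining one power of `‖y‖`. For `y = h v` with `‖v‖ = 1`
this makes the difference quotient `2Kh²`-close to the Rayleigh quotient `⟪H v, v⟫` uniformly
on the unit sphere, and the infima of two uniformly `C`-close functions are `C`-close.
-/

open RealInnerProductSpace Asymptotics Metric Set

lemma sInf_le_sInf_add {α : Type*} {P : α → Prop} {f g : α → ℝ} {C : ℝ}
    (hf : BddBelow {t | ∃ a, P a ∧ t = f a}) (hne : ∃ a, P a)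
    (hfg : ∀ a, P a → f a ≤ g a + C) :
    sInf {t | ∃ a, P a ∧ t = f a} ≤ sInf {t | ∃ a, P a ∧ t = g a} + C := by
  obtain ⟨a₀, ha₀⟩ := hne
  rw [← sub_le_iff_le_add]
  refine le_csInf ⟨g a₀, a₀, ha₀, rfl⟩ ?_
  rintro _ ⟨a, ha, rfl⟩
  linarith [csInf_le hf ⟨a, ha, rfl⟩, hfg a ha]

lemma abs_sInf_sub_sInf_le {α : Type*} {P : α → Prop} {f g : α → ℝ} {C m : ℝ} (hC : 0 ≤ C)
    (hg : ∀ a, P a → m ≤ g a) (hfg : ∀ a, P a → |f a - g a| ≤ C) :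
    |sInf {t | ∃ a, P a ∧ t = f a} - sInf {t | ∃ a, P a ∧ t = g a}| ≤ C := by
  by_cases hne : ∃ a, P a
  · have hf : BddBelow {t | ∃ a, P a ∧ t = f a} := ⟨m - C, by
      rintro _ ⟨a, ha, rfl⟩
      linarith [hg a ha, (abs_le.1 (hfg a ha)).1]⟩
    have hg' : BddBelow {t | ∃ a, P a ∧ t = g a} := ⟨m, by rintro _ ⟨a, ha, rfl⟩; exact hg a ha⟩
    refine abs_sub_le_iff.2 ⟨?_, ?_⟩
    · linarith [sInf_le_sInf_add (g := g) (C := C) hf hne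
        fun a ha => by linarith [(abs_le.1 (hfg a ha)).2]]
    · linarith [sInf_le_sInf_add (g := f) (C := C) hg' hne
        fun a ha => by linarith [(abs_le.1 (hfg a ha)).1]]
  · -- both sets are empty, and `sInf ∅ = 0` in `ℝ`
    push Not at hne
    simpa [hne] using hC

lemma neg_norm_le_inner_apply_self {E : Type*} [NormedAddCommGroup E] [InnerProductSpace ℝ E]
    (T : E →L[ℝ] E) {v : E} (hv : ‖v‖ = 1) : -‖T‖ ≤ ⟪T v, v⟫ := by
  refine neg_le_of_abs_le ((abs_real_inner_le_norm (T v) v).trans ?_)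
  simpa [hv] using T.le_opNorm v

section CentralDifferences

variable {E F : Type*} [NormedAddCommGroup E] [NormedSpace ℝ E]
  [NormedAddCommGroup F] [NormedSpace ℝ F] {Φ : E → F} {x w : E} {r : ℝ}

lemma hasDerivAt_comp_add_smul {s : ℝ} (hΦ : DifferentiableAt ℝ Φ (x + s • w)) :
    HasDerivAt (fun t : ℝ => Φ (x + t • w)) (fderiv ℝ Φ (x + s • w) w) s :=
  hΦ.hasFDerivAt.comp_hasDerivAt s (((hasDerivAt_id s).smul_const w).const_add x |>.congr_deriv
    (one_smul ℝ w))

lemma hasDerivAt_comp_sub_smul {s : ℝ} (hΦ : DifferentiableAt ℝ Φ (x - s • w)) :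
    HasDerivAt (fun t : ℝ => Φ (x - t • w)) (-fderiv ℝ Φ (x - s • w) w) s := by
  have := hΦ.hasFDerivAt.comp_hasDerivAt s (((hasDerivAt_id s).smul_const w).const_sub x)
  simpa [Function.comp_def] using this

lemma norm_smul_le_norm_of_mem_Icc {s : ℝ} (hs : s ∈ Icc (0 : ℝ) 1) : ‖s • w‖ ≤ ‖w‖ := by
  rw [norm_smul, Real.norm_of_nonneg hs.1]
  exact mul_le_of_le_one_left (norm_nonneg w) hs.2

lemma add_smul_mem_closedBall {s : ℝ} (hs : s ∈ Icc (0 : ℝ) 1) :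
    x + s • w ∈ closedBall x ‖w‖ := by
  rw [mem_closedBall_iff_norm, add_sub_cancel_left]
  exact norm_smul_le_norm_of_mem_Icc hs

lemma sub_smul_mem_closedBall {s : ℝ} (hs : s ∈ Icc (0 : ℝ) 1) :
    x - s • w ∈ closedBall x ‖w‖ := by
  simpa [sub_eq_add_neg] using add_smul_mem_closedBall (x := x) (w := -w) hs

lemma norm_add_add_sub_two_smul_sub_le {L : F} {A : ℝ}
    (hΦ : ∀ y ∈ closedBall x ‖w‖, DifferentiableAt ℝ Φ y)
    (hA : ∀ s ∈ Icc (0 : ℝ) 1,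
      ‖fderiv ℝ Φ (x + s • w) w - fderiv ℝ Φ (x - s • w) w - (2 * s) • L‖ ≤ A) :
    ‖Φ (x + w) + Φ (x - w) - (2 : ℝ) • Φ x - L‖ ≤ A := by
  have hderiv : ∀ s ∈ Icc (0 : ℝ) 1, HasDerivAt
      (fun t : ℝ => Φ (x + t • w) + Φ (x - t • w) - (2 : ℝ) • Φ x - t ^ 2 • L)
      (fderiv ℝ Φ (x + s • w) w - fderiv ℝ Φ (x - s • w) w - (2 * s) • L) s := by
    intro s hs
    have hL : HasDerivAt (fun t : ℝ => t ^ 2 • L) ((2 * s) • L) s := by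
      simpa using (hasDerivAt_pow 2 s).smul_const L
    exact (((hasDerivAt_comp_add_smul (hΦ _ (add_smul_mem_closedBall hs))).add
      (hasDerivAt_comp_sub_smul (hΦ _ (sub_smul_mem_closedBall hs)))).sub_const _).sub hL
      |>.congr_deriv (by abel)
  simpa [two_smul] using norm_image_sub_le_of_norm_deriv_le_segment_01'
    (fun s hs => (hderiv s hs).hasDerivWithinAt) (fun s hs => hA s (Ico_subset_Icc_self hs))

lemma norm_sub_sub_two_smul_sub_le {L : F} {A : ℝ}
    (hΦ : ∀ y ∈ closedBall x ‖w‖, DifferentiableAt ℝ Φ y)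
    (hA : ∀ s ∈ Icc (0 : ℝ) 1,
      ‖fderiv ℝ Φ (x + s • w) w + fderiv ℝ Φ (x - s • w) w - (2 : ℝ) • L‖ ≤ A) :
    ‖Φ (x + w) - Φ (x - w) - (2 : ℝ) • L‖ ≤ A := by
  have hderiv : ∀ s ∈ Icc (0 : ℝ) 1, HasDerivAt
      (fun t : ℝ => Φ (x + t • w) - Φ (x - t • w) - (2 * t) • L)
      (fderiv ℝ Φ (x + s • w) w + fderiv ℝ Φ (x - s • w) w - (2 : ℝ) • L) s := by
    intro s hs
    have hL : HasDerivAt (fun t : ℝ => (2 * t) • L) ((2 : ℝ) • L) s := by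
      simpa using ((hasDerivAt_id s).const_mul 2).smul_const L
    exact ((hasDerivAt_comp_add_smul (hΦ _ (add_smul_mem_closedBall hs))).sub
      (hasDerivAt_comp_sub_smul (hΦ _ (sub_smul_mem_closedBall hs)))).sub hL
      |>.congr_deriv (by abel)
  simpa using norm_image_sub_le_of_norm_deriv_le_segment_01'
    (fun s hs => (hderiv s hs).hasDerivWithinAt) (fun s hs => hA s (Ico_subset_Icc_self hs))

lemma norm_add_add_sub_two_smul_le_of_lipschitzOnWith {K : NNReal}
    (hΦ : ∀ y ∈ closedBall x r, DifferentiableAt ℝ Φ y)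
    (hlip : LipschitzOnWith K (fderiv ℝ Φ) (closedBall x r)) :
    ∀ y, ‖y‖ ≤ r → ‖Φ (x + y) + Φ (x - y) - (2 : ℝ) • Φ x‖ ≤ 2 * K * ‖y‖ ^ 2 := by
  intro y hy
  have hsub : closedBall x ‖y‖ ⊆ closedBall x r := closedBall_subset_closedBall hy
  simpa using norm_add_add_sub_two_smul_sub_le (L := 0) (fun z hz => hΦ z (hsub hz))
    fun s hs => by
      have hdist : ‖(x + s • y) - (x - s • y)‖ ≤ 2 * ‖y‖ := by
        rw [add_sub_sub_cancel, ← two_smul ℝ, norm_smul, Real.norm_two]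
        gcongr
        exact norm_smul_le_norm_of_mem_Icc hs
      calc ‖fderiv ℝ Φ (x + s • y) y - fderiv ℝ Φ (x - s • y) y - (2 * s) • (0 : F)‖
          = ‖(fderiv ℝ Φ (x + s • y) - fderiv ℝ Φ (x - s • y)) y‖ := by simp
        _ ≤ ‖fderiv ℝ Φ (x + s • y) - fderiv ℝ Φ (x - s • y)‖ * ‖y‖ :=
          ContinuousLinearMap.le_opNorm _ _
        _ ≤ K * ‖(x + s • y) - (x - s • y)‖ * ‖y‖ := by
          gcongr
          exact hlip.norm_sub_le (hsub (add_smul_mem_closedBall hs))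
            (hsub (sub_smul_mem_closedBall hs))
        _ ≤ K * (2 * ‖y‖) * ‖y‖ := by gcongr
        _ = 2 * K * ‖y‖ ^ 2 := by ring

lemma norm_sub_sub_two_smul_fderiv_le {M : ℝ} (hM : 0 ≤ M)
    (hΦ : ∀ y ∈ closedBall x r, DifferentiableAt ℝ Φ y)
    (hsecond : ∀ y, ‖y‖ ≤ r →
      ‖fderiv ℝ Φ (x + y) + fderiv ℝ Φ (x - y) - (2 : ℝ) • fderiv ℝ Φ x‖ ≤ M * ‖y‖ ^ 2) :
    ∀ y, ‖y‖ ≤ r → ‖Φ (x + y) - Φ (x - y) - (2 : ℝ) • fderiv ℝ Φ x y‖ ≤ M * ‖y‖ ^ 3 := by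
  intro y hy
  have hsub : closedBall x ‖y‖ ⊆ closedBall x r := closedBall_subset_closedBall hy
  refine norm_sub_sub_two_smul_sub_le (fun z hz => hΦ z (hsub hz)) fun s hs => ?_
  have hsy : ‖s • y‖ ≤ ‖y‖ := norm_smul_le_norm_of_mem_Icc hs
  calc ‖fderiv ℝ Φ (x + s • y) y + fderiv ℝ Φ (x - s • y) y - (2 : ℝ) • fderiv ℝ Φ x y‖
      = ‖(fderiv ℝ Φ (x + s • y) + fderiv ℝ Φ (x - s • y) - (2 : ℝ) • fderiv ℝ Φ x) y‖ := by
        simp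
    _ ≤ M * ‖s • y‖ ^ 2 * ‖y‖ :=
        (ContinuousLinearMap.le_opNorm _ _).trans (by gcongr; exact hsecond _ (hsy.trans hy))
    _ ≤ M * ‖y‖ ^ 2 * ‖y‖ := by gcongr
    _ = M * ‖y‖ ^ 3 := by ring

end CentralDifferences

section Hessian

variable {E : Type*} [NormedAddCommGroup E] [InnerProductSpace ℝ E] [CompleteSpace E]
  {u : E → ℝ} {x : E} {r : ℝ}

lemma inner_gradient_eq_fderiv (z w : E) : ⟪gradient u z, w⟫ = fderiv ℝ u z w :=
  InnerProductSpace.toDual_symm_apply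

lemma ContDiffAt.gradient {m n : WithTop ℕ∞} (hu : ContDiffAt ℝ n u x) (hmn : m + 1 ≤ n) :
    ContDiffAt ℝ m (gradient u) x :=
  (InnerProductSpace.toDual ℝ E).symm.contDiff.contDiffAt.comp x (hu.fderiv_right hmn)

lemma abs_add_add_sub_two_mul_sub_inner_le {H : E →L[ℝ] E} {M : ℝ} (hM : 0 ≤ M)
    (hu : ∀ y ∈ closedBall x r, DifferentiableAt ℝ u y)
    (hfirst : ∀ y, ‖y‖ ≤ r →
      ‖gradient u (x + y) - gradient u (x - y) - (2 : ℝ) • H y‖ ≤ M * ‖y‖ ^ 3)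
    {y : E} (hy : ‖y‖ ≤ r) :
    |u (x + y) + u (x - y) - 2 * u x - ⟪H y, y⟫| ≤ M * ‖y‖ ^ 4 := by
  have hsub : closedBall x ‖y‖ ⊆ closedBall x r := closedBall_subset_closedBall hy
  have := norm_add_add_sub_two_smul_sub_le (L := ⟪H y, y⟫) (A := M * ‖y‖ ^ 4)
    (fun z hz => hu z (hsub hz)) fun s hs => by
      have hsy : ‖s • y‖ ≤ ‖y‖ := norm_smul_le_norm_of_mem_Icc hs
      have hinner : fderiv ℝ u (x + s • y) y - fderiv ℝ u (x - s • y) y - (2 * s) • ⟪H y, y⟫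
          = ⟪gradient u (x + s • y) - gradient u (x - s • y) - (2 : ℝ) • H (s • y), y⟫ := by
        rw [inner_sub_left, inner_sub_left, inner_gradient_eq_fderiv, inner_gradient_eq_fderiv,
          map_smul, inner_smul_left, inner_smul_left, smul_eq_mul]
        simp only [RCLike.conj_to_real]
        ring
      rw [hinner, Real.norm_eq_abs]
      calc _ ≤ ‖gradient u (x + s • y) - gradient u (x - s • y) - (2 : ℝ) • H (s • y)‖ * ‖y‖ :=
            abs_real_inner_le_norm _ _
        _ ≤ M * ‖s • y‖ ^ 3 * ‖y‖ := by gcongr; exact hfirst _ (hsy.trans hy)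
        _ ≤ M * ‖y‖ ^ 3 * ‖y‖ := by gcongr
        _ = M * ‖y‖ ^ 4 := by ring
  simpa only [Real.norm_eq_abs, smul_eq_mul] using this

lemma abs_secondDiff_sub_inner_hessian_le {K : NNReal}
    (hu : ∀ y ∈ closedBall x r, ContDiffAt ℝ 3 u y)
    (hlip : LipschitzOnWith K (fderiv ℝ (fderiv ℝ (gradient u))) (closedBall x r))
    {y : E} (hy : ‖y‖ ≤ r) :
    |u (x + y) - 2 * u x + u (x - y) - ⟪fderiv ℝ (gradient u) x y, y⟫| ≤ 2 * K * ‖y‖ ^ 4 := by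
  have hG : ∀ z ∈ closedBall x r, ContDiffAt ℝ 2 (gradient u) z :=
    fun z hz => (hu z hz).gradient le_rfl
  have hsecond := norm_add_add_sub_two_smul_le_of_lipschitzOnWith
    (fun z hz => ((hG z hz).fderiv_right (m := 1) le_rfl).differentiableAt one_ne_zero) hlip
  have hfirst := norm_sub_sub_two_smul_fderiv_le (by positivity)
    (fun z hz => (hG z hz).differentiableAt (by norm_num)) hsecond
  have := abs_add_add_sub_two_mul_sub_inner_le (by positivity)
    (fun z hz => (hu z hz).differentiableAt (by norm_num)) hfirst hy
  rwa [add_sub_right_comm (u (x + y)) (u (x - y))] at this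

lemma abs_secondDiffQuotient_sub_inner_hessian_le {K : NNReal}
    (hu : ∀ y ∈ closedBall x r, ContDiffAt ℝ 3 u y)
    (hlip : LipschitzOnWith K (fderiv ℝ (fderiv ℝ (gradient u))) (closedBall x r))
    {v : E} (hv : ‖v‖ = 1) {h : ℝ} (hh : 0 < h) (hhr : h ≤ r) :
    |(u (x + h • v) - 2 * u x + u (x - h • v)) / h ^ 2 - ⟪fderiv ℝ (gradient u) x v, v⟫|
      ≤ 2 * K * h ^ 2 := by
  have hnorm : ‖h • v‖ = h := by rw [norm_smul, hv, mul_one, Real.norm_of_nonneg hh.le]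
  have key := abs_secondDiff_sub_inner_hessian_le hu hlip (hnorm.trans_le hhr)
  rw [hnorm, map_smul, inner_smul_left, inner_smul_right, RCLike.conj_to_real, ← mul_assoc,
    ← sq] at key
  have hh2 : 0 < h ^ 2 := by positivity
  rw [← mul_div_cancel_left₀ ⟪fderiv ℝ (gradient u) x v, v⟫ hh2.ne', ← sub_div, abs_div,
    abs_of_pos hh2, div_le_iff₀ hh2]
  exact key.trans_eq (by ring)

end Hessian

theorem wide_stencil_smallest_eigenvalue_consistency_general
    {n : ℕ}
    (u : EuclideanSpace ℝ (Fin n) → ℝ)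
    (x : EuclideanSpace ℝ (Fin n))
    (hu : ContDiffAt ℝ 4 u x) :
    (fun h : ℝ =>
        sInf {t : ℝ | ∃ v : EuclideanSpace ℝ (Fin n), ‖v‖ = 1 ∧
            t = (u (x + h • v) - 2 * u x + u (x - h • v)) / h ^ 2}
          - sInf {t : ℝ | ∃ v : EuclideanSpace ℝ (Fin n), ‖v‖ = 1 ∧
              t = ⟪fderiv ℝ (gradient u) x v, v⟫})
      =O[nhdsWithin 0 (Set.Ioi 0)] fun h : ℝ => h ^ 2 := by
  obtain ⟨K, s, hs, hlip⟩ := (((hu.gradient (m := 3) le_rfl).fderiv_right (m := 2) le_rfl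
    ).fderiv_right (m := 1) le_rfl).exists_lipschitzOnWith
  obtain ⟨r, hr, hball⟩ :=
    nhds_basis_closedBall.mem_iff.1 (Filter.inter_mem hs (hu.eventually (by simp)))
  have hu3 : ∀ y ∈ closedBall x r, ContDiffAt ℝ 3 u y :=
    fun y hy => (show ContDiffAt ℝ 4 u y from (hball hy).2).of_le (by norm_num)
  refine isBigO_iff.2 ⟨2 * K, ?_⟩
  filter_upwards [Ioo_mem_nhdsGT hr] with h hh
  rw [Real.norm_eq_abs, Real.norm_of_nonneg (by positivity : (0 : ℝ) ≤ h ^ 2)]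
  exact abs_sInf_sub_sInf_le (by positivity) (fun v hv => neg_norm_le_inner_apply_self _ hv)
    fun v hv => abs_secondDiffQuotient_sub_inner_hessian_le hu3
      (hlip.mono fun y hy => (hball hy).1) hv hh.1 hh.2.le

theorem wide_stencil_smallest_eigenvalue_consistency
    {n : ℕ} (hn : 0 < n)
    (u : EuclideanSpace ℝ (Fin n) → ℝ)
    (x : EuclideanSpace ℝ (Fin n))
    (hu : ContDiffAt ℝ 4 u x) :
    (fun h : ℝ =>
        sInf {t : ℝ | ∃ v : EuclideanSpace ℝ (Fin n), ‖v‖ = 1 ∧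
            t = (u (x + h • v) - 2 * u x + u (x - h • v)) / h ^ 2}
          - sInf {t : ℝ | ∃ v : EuclideanSpace ℝ (Fin n), ‖v‖ = 1 ∧
              t = ⟪fderiv ℝ (gradient u) x v, v⟫})
      =O[nhdsWithin 0 (Set.Ioi 0)] fun h : ℝ => h ^ 2 :=
  wide_stencil_smallest_eigenvalue_consistency_general u x hu
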